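/- arXiv:2411.06405 — 2 statements merged into one kernel-verified Lean document; each statement's English description precedes it below -/
import Mathlib

section
/- (Lower bound by trussness) For every finite simple graph G, integer h ≥ 1, edge e of G, and natural number n, the higher-order H-index iterate satisfies H^(n)sup(e) ≥ t(e,h) − 2, where t(e,h) is the h-trussness of e. -/
/-- The H-index of a finite multiset of natural numbers: the largest `y` such that
at least `y` elements of the multiset are `≥ y` (`0` for the empty multiset). -/
noncomputable def hIndex (S : Multiset ℕ) : ℕ :=
  sSup {y : ℕ | y ≤ (S.filter (fun x => y ≤ x)).card}

/-- The set of common `h`-neighbors of an edge `e` in `G`: the vertices `w`, distinct from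
both endpoints of `e`, that are within distance `h` (i.e. joined by a walk of length `≤ h`)
of both endpoints of `e`. -/
def commonHNbrs {V : Type*} (G : SimpleGraph V) (h : ℕ) (e : Sym2 V) : Set V :=
  {w | ∀ x ∈ e, w ≠ x ∧ ∃ p : G.Walk x w, p.length ≤ h}

/-- The `h`-support of an edge `e` in `G`: the number of common `h`-neighbors of `e`. -/
noncomputable def hSupport {V : Type*} (G : SimpleGraph V) (h : ℕ) (e : Sym2 V) : ℕ :=
  (commonHNbrs G h e).ncard

/-- The `h`-hop reachable path key of `a, b` with respect to an edge-value function `F`: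
the maximum over all (nontrivial) paths `p` from `a` to `b` of length `≤ h` of the minimum
of `F` over the edges of `p`. -/
noncomputable def pathKey {V : Type*} (G : SimpleGraph V) (h : ℕ) (F : Sym2 V → ℕ)
    (a b : V) : ℕ :=
  sSup {m | ∃ p : G.Walk a b, 0 < p.length ∧ p.length ≤ h ∧
    m = sInf {x | ∃ f ∈ p.edges, x = F f}}

/-- For an edge `e = (u,v)` and a vertex `w`, the value `min (P(u,w), P(v,w))` where `P`
is the path key with respect to `F`. -/
noncomputable def edgeKey {V : Type*} (G : SimpleGraph V) (h : ℕ) (F : Sym2 V → ℕ)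
    (e : Sym2 V) (w : V) : ℕ :=
  sInf {m | ∃ x ∈ e, m = pathKey G h F x w}

/-- The higher-order H-index iterates: `HSup G h 0 e = hSupport G h e`, and
`HSup G h (n+1) e = H({min (P(u,w), P(v,w)) : w a common h-neighbor of e})` where `P` is
the path key with respect to `HSup G h n`. -/
noncomputable def HSup {V : Type*} [Fintype V] (G : SimpleGraph V) (h : ℕ) :
    ℕ → Sym2 V → ℕ
  | 0 => fun e => hSupport G h e
  | n + 1 => fun e =>
      hIndex ((commonHNbrs G h e).toFinite.toFinset.val.map (edgeKey G h (HSup G h n) e))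

/-- A graph `S` satisfies the `(k,h)`-truss property if every edge of `S` has `h`-support
at least `k - 2`, computed within `S`. -/
def KHTrussProp {V : Type*} (S : SimpleGraph V) (h k : ℕ) : Prop :=
  ∀ e ∈ S.edgeSet, k ≤ hSupport S h e + 2

/-- `S` is the `(k,h)`-truss of `G`: a maximal subgraph of `G` each of whose edges has
`h`-support at least `k-2` within `S`. -/
def IsKHTruss {V : Type*} (G S : SimpleGraph V) (h k : ℕ) : Prop :=
  S ≤ G ∧ KHTrussProp S h k ∧
    ∀ T : SimpleGraph V, T ≤ G → KHTrussProp T h k → S ≤ T → T = S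

/-- The `h`-trussness `t(e,h)` of an edge `e` of `G`: the largest `k` such that some
`(k,h)`-truss of `G` contains `e`. -/
noncomputable def hTrussness {V : Type*} (G : SimpleGraph V) (h : ℕ) (e : Sym2 V) : ℕ :=
  sSup {k | ∃ S : SimpleGraph V, IsKHTruss G S h k ∧ e ∈ S.edgeSet}


open SimpleGraph in
private lemma walk_mapLe_edges {V : Type*} {G S : SimpleGraph V} (hle : S ≤ G) {u v : V}
    (p : S.Walk u v) : (p.mapLe hle).edges = p.edges := by
  have : Sym2.map (⇑(Hom.ofLE hle)) = id := Sym2.map_id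
  simp [Walk.mapLe, this]

private lemma commonHNbrs_mono {V : Type*} {G S : SimpleGraph V} (hle : S ≤ G) (h : ℕ)
    (e : Sym2 V) : commonHNbrs S h e ⊆ commonHNbrs G h e := by
  intro w hw x hx
  obtain ⟨hne, p, hp⟩ := hw x hx
  exact ⟨hne, p.mapLe hle, by simpa using hp⟩

private lemma hSupport_le_card {V : Type*} [Fintype V] (G : SimpleGraph V) (h : ℕ)
    (e : Sym2 V) : hSupport G h e ≤ Fintype.card V := by
  have := Set.ncard_le_ncard (Set.subset_univ (commonHNbrs G h e)) Set.finite_univ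
  simpa [hSupport, Set.ncard_univ] using this

private lemma hIndex_le_card (S : Multiset ℕ) : hIndex S ≤ Multiset.card S := by
  apply csSup_le ⟨0, by simp⟩
  intro y hy
  exact hy.trans (Multiset.card_le_card (Multiset.filter_le _ S))

private lemma hIndex_ge (S : Multiset ℕ) (m : ℕ)
    (hm : m ≤ (S.filter (fun x => m ≤ x)).card) : m ≤ hIndex S := by
  unfold hIndex
  refine le_csSup ⟨Multiset.card S, ?_⟩ hm
  intro y hy
  exact hy.trans (Multiset.card_le_card (Multiset.filter_le _ S))

private lemma HSup_le_card {V : Type*} [Fintype V] (G : SimpleGraph V) (h : ℕ) :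
    ∀ n (e : Sym2 V), HSup G h n e ≤ Fintype.card V := by
  intro n e
  cases n with
  | zero => exact hSupport_le_card G h e
  | succ n =>
      refine (hIndex_le_card _).trans ?_
      rw [Multiset.card_map]
      exact Finset.card_le_univ _

private lemma main_lemma {V : Type*} [Fintype V] {G S : SimpleGraph V} {h k : ℕ}
    (hle : S ≤ G) (hT : KHTrussProp S h k) :
    ∀ n, ∀ f ∈ S.edgeSet, k - 2 ≤ HSup G h n f := by
  intro n
  induction n with
  | zero =>
      intro f hf
      have h1 : k ≤ hSupport S h f + 2 := hT f hf
      have h2 : hSupport S h f ≤ hSupport G h f :=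
        Set.ncard_le_ncard (commonHNbrs_mono hle h f) (Set.toFinite _)
      show k - 2 ≤ hSupport G h f
      omega
  | succ n ih =>
      intro f hf
      set F := HSup G h n with hF
      show k - 2 ≤ hIndex ((commonHNbrs G h f).toFinite.toFinset.val.map (edgeKey G h F f))
      -- each common h-neighbor of f within S has edgeKey ≥ k - 2
      have key : ∀ w ∈ commonHNbrs S h f, k - 2 ≤ edgeKey G h F f w := by
        intro w hw
        have hpk : ∀ x ∈ f, k - 2 ≤ pathKey G h F x w := by
          intro x hx
          obtain ⟨hne, p, hp⟩ := hw x hx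
          have hpos : 0 < p.length := by
            rcases Nat.eq_zero_or_pos p.length with h0 | h0
            · exact absurd (SimpleGraph.Walk.eq_of_length_eq_zero h0).symm hne
            · exact h0
          set p' := p.mapLe hle with hp'
          have hedges : p'.edges = p.edges := walk_mapLe_edges hle p
          have hlen : p'.length = p.length := by simp [hp', SimpleGraph.Walk.mapLe]
          have hmem : sInf {x | ∃ g ∈ p'.edges, x = F g} ∈
              {m | ∃ q : G.Walk x w, 0 < q.length ∧ q.length ≤ h ∧
                m = sInf {x | ∃ g ∈ q.edges, x = F g}} :=
            ⟨p', by omega, by omega, rfl⟩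
          have hbdd : BddAbove {m | ∃ q : G.Walk x w, 0 < q.length ∧ q.length ≤ h ∧
              m = sInf {x | ∃ g ∈ q.edges, x = F g}} := by
            refine ⟨Fintype.card V, ?_⟩
            rintro m ⟨q, hq0, _, rfl⟩
            have : q.edges ≠ [] := by
              intro hnil
              rw [← SimpleGraph.Walk.length_edges, hnil] at hq0; simp at hq0
            obtain ⟨g, hg⟩ := List.exists_mem_of_ne_nil _ this
            have hgmem : F g ∈ {x | ∃ g' ∈ q.edges, x = F g'} := ⟨g, hg, rfl⟩
            exact (Nat.sInf_le hgmem).trans (HSup_le_card G h n g)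
          refine le_trans ?_ (le_csSup hbdd hmem)
          apply le_csInf
          · have : p'.edges ≠ [] := by
              intro hnil
              have : p'.length = 0 := by rw [← SimpleGraph.Walk.length_edges, hnil]; rfl
              omega
            obtain ⟨g, hg⟩ := List.exists_mem_of_ne_nil _ this
            exact ⟨F g, g, hg, rfl⟩
          · rintro m ⟨g, hg, rfl⟩
            rw [hedges] at hg
            exact ih g (p.edges_subset_edgeSet hg)
        apply le_csInf
        · exact ⟨pathKey G h F (Quot.out f).1 w, (Quot.out f).1, Sym2.out_fst_mem f, rfl⟩
        · rintro m ⟨x, hx, rfl⟩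
          exact hpk x hx
      apply hIndex_ge
      classical
      rw [Multiset.filter_map, Multiset.card_map]
      have hsub : (commonHNbrs S h f).toFinite.toFinset ⊆
          ((commonHNbrs G h f).toFinite.toFinset.filter
            (fun w => ((fun x => k - 2 ≤ x) ∘ edgeKey G h F f) w)) := by
        intro w hw
        rw [Set.Finite.mem_toFinset] at hw
        rw [Finset.mem_filter, Set.Finite.mem_toFinset]
        exact ⟨commonHNbrs_mono hle h f hw, key w hw⟩
      have hcard := Finset.card_le_card hsub
      have h1 : k ≤ hSupport S h f + 2 := hT f hf
      have h2 : hSupport S h f = (commonHNbrs S h f).toFinite.toFinset.card :=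
        Set.ncard_eq_toFinset_card _ _
      have h3 : ((commonHNbrs G h f).toFinite.toFinset.filter
          (fun w => ((fun x => k - 2 ≤ x) ∘ edgeKey G h F f) w)).card =
          Multiset.card (Multiset.filter ((fun x => k - 2 ≤ x) ∘ edgeKey G h F f)
            (commonHNbrs G h f).toFinite.toFinset.val) := rfl
      omega

/-- Lower bound by trussness: `H^(n)sup(e) ≥ t(e,h) - 2` for every `n`. -/
theorem HSup_ge_trussness_sub_two {V : Type*} [Fintype V] (G : SimpleGraph V) (h : ℕ)
    (hh : 1 ≤ h) (e : Sym2 V) (he : e ∈ G.edgeSet) (n : ℕ) :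
    hTrussness G h e - 2 ≤ HSup G h n e := by
  unfold hTrussness
  set K := {k | ∃ S : SimpleGraph V, IsKHTruss G S h k ∧ e ∈ S.edgeSet} with hK
  rcases K.eq_empty_or_nonempty with hE | hne
  · rw [hE]
    simp
  · have hb : sSup K ≤ HSup G h n e + 2 := by
      apply csSup_le hne
      rintro k ⟨S, ⟨hle, hT, _⟩, heS⟩
      have := main_lemma hle hT n e heS
      omega
    omega
end

section
/- (Redundant-computation pruning, general form) Fix n ≥ 2 and an edge e of G, and let E_G(e,h) denote the set of edges of G that lie on some path of length ≤ h from an endpoint of e to some common h-neighbor w ∈ △_G(e,h). Suppose every edge e' ∈ E_G(e,h) satisfies at least one of the following three conditions: (i) H^(n-2)sup(e') = H^(n-1)sup(e'); (ii) H^(n-2)sup(e') > H^(n-1)sup(e') and H^(n-2)sup(e') < H^(n-1)sup(e); (iii) H^(n-2)sup(e') > H^(n-1)sup(e') and H^(n-1)sup(e') ≥ H^(n-1)sup(e). Then H^(n)sup(e) = H^(n-1)sup(e). -/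
section MyAux

private lemma myCountP_mono {α : Type*} {p q : α → Prop} [DecidablePred p] [DecidablePred q]
    (W : Multiset α) (hpq : ∀ w ∈ W, p w → q w) :
    Multiset.countP p W ≤ Multiset.countP q W := by
  induction W using Multiset.induction_on with
  | empty => simp
  | cons a t ih =>
    rw [Multiset.countP_cons, Multiset.countP_cons]
    have h1 := ih (fun w hw => hpq w (Multiset.mem_cons_of_mem hw))
    have h2 : (if p a then 1 else 0) ≤ (if q a then 1 else 0) := by
      by_cases hp : p a
      · simp [hp, hpq a (Multiset.mem_cons_self a t) hp]
      · simp [hp]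
    omega

private lemma hIndex_le {S : Multiset ℕ} {y : ℕ}
    (hy : y ≤ (S.filter (fun x => y ≤ x)).card) : y ≤ hIndex S :=
  le_csSup (s := {y : ℕ | y ≤ (S.filter (fun x => y ≤ x)).card})
    ⟨S.card, fun _ hz => le_trans hz (Multiset.card_le_card (Multiset.filter_le _ _))⟩ hy

private lemma hIndex_spec (S : Multiset ℕ) :
    hIndex S ≤ (S.filter (fun x => hIndex S ≤ x)).card :=
  Nat.sSup_mem (s := {y : ℕ | y ≤ (S.filter (fun x => y ≤ x)).card}) ⟨0, Nat.zero_le _⟩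
    ⟨S.card, fun _ hz => le_trans hz (Multiset.card_le_card (Multiset.filter_le _ _))⟩

private lemma hIndex_map_eq {α : Type*} (W : Multiset α) (a₁ a₂ : α → ℕ)
    (hw : ∀ w ∈ W, a₂ w ≤ a₁ w ∧ (hIndex (W.map a₁) ≤ a₁ w → hIndex (W.map a₁) ≤ a₂ w)) :
    hIndex (W.map a₂) = hIndex (W.map a₁) := by
  set K := hIndex (W.map a₁) with hK
  have hcount : ∀ (a : α → ℕ) (y : ℕ),
      (((W.map a)).filter (fun x => y ≤ x)).card
        = Multiset.card (W.filter (fun w => y ≤ a w)) := by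
    intro a y
    rw [← Multiset.countP_eq_card_filter, Multiset.countP_map]
  have hKmem : K ≤ ((W.map a₂).filter (fun x => K ≤ x)).card := by
    rw [hcount]
    calc K ≤ ((W.map a₁).filter (fun x => K ≤ x)).card := hIndex_spec _
      _ = (W.filter (fun w => K ≤ a₁ w)).card := hcount a₁ K
      _ = Multiset.countP (fun w => K ≤ a₁ w) W := (Multiset.countP_eq_card_filter _ _).symm
      _ ≤ Multiset.countP (fun w => K ≤ a₂ w) W :=
          myCountP_mono _ (fun w hw' hle => (hw w hw').2 hle)
      _ = (W.filter (fun w => K ≤ a₂ w)).card := Multiset.countP_eq_card_filter _ _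
  refine le_antisymm (csSup_le' ?_) (hIndex_le hKmem)
  rintro y hy
  simp only [Set.mem_setOf_eq] at hy
  by_contra hyK
  push_neg at hyK
  have h2 : ((W.map a₂).filter (fun x => y ≤ x)).card
      ≤ ((W.map a₁).filter (fun x => y ≤ x)).card := by
    rw [hcount, hcount, ← Multiset.countP_eq_card_filter, ← Multiset.countP_eq_card_filter]
    exact myCountP_mono _ (fun w hw' hle => hle.trans (hw w hw').1)
  have h3 : ¬ (y ≤ ((W.map a₁).filter (fun x => y ≤ x)).card) := by
    intro hmem
    exact absurd (hIndex_le hmem) (by omega)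
  omega

end MyAux
section MyAux2

variable {V : Type*} {G : SimpleGraph V} {h : ℕ}

private lemma pathKey_bddAbove [Finite V] (F : Sym2 V → ℕ) (a b : V) :
    BddAbove {m | ∃ p : G.Walk a b, 0 < p.length ∧ p.length ≤ h ∧
      m = sInf {x | ∃ f ∈ p.edges, x = F f}} := by
  apply BddAbove.mono ?_ (((Set.finite_range F).union (Set.finite_singleton 0)).bddAbove)
  rintro m ⟨p, _, _, rfl⟩
  rcases Set.eq_empty_or_nonempty {x | ∃ f ∈ p.edges, x = F f} with hT | hT
  · rw [hT, Nat.sInf_empty]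
    exact Or.inr rfl
  · obtain ⟨f, _, hf⟩ := Nat.sInf_mem hT
    exact Or.inl ⟨f, hf.symm⟩

private lemma edges_nonempty {a b : V} {p : G.Walk a b} (hp : 0 < p.length) :
    ∃ f, f ∈ p.edges := by
  apply List.exists_mem_of_ne_nil
  intro hnil
  rw [← SimpleGraph.Walk.length_edges, hnil] at hp
  simp at hp

private lemma pathKey_le [Finite V] (F₁ F₂ : Sym2 V → ℕ) (a b : V)
    (hle : ∀ (p : G.Walk a b), p.length ≤ h → ∀ f ∈ p.edges, F₂ f ≤ F₁ f) :
    pathKey G h F₂ a b ≤ pathKey G h F₁ a b := by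
  apply csSup_le'
  rintro m ⟨p, hp0, hph, rfl⟩
  have hne : {x | ∃ f ∈ p.edges, x = F₁ f}.Nonempty := by
    obtain ⟨f, hf⟩ := edges_nonempty hp0
    exact ⟨F₁ f, f, hf, rfl⟩
  obtain ⟨f₁, hf₁, hm₁⟩ := Nat.sInf_mem hne
  calc sInf {x | ∃ f ∈ p.edges, x = F₂ f} ≤ F₂ f₁ := Nat.sInf_le ⟨f₁, hf₁, rfl⟩
    _ ≤ F₁ f₁ := hle p hph f₁ hf₁
    _ = sInf {x | ∃ f ∈ p.edges, x = F₁ f} := hm₁.symm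
    _ ≤ pathKey G h F₁ a b := le_csSup (pathKey_bddAbove F₁ a b) ⟨p, hp0, hph, rfl⟩

private lemma le_pathKey [Finite V] (F₁ F₂ : Sym2 V → ℕ) (a b : V) (K : ℕ)
    (hcd : ∀ (p : G.Walk a b), p.length ≤ h → ∀ f ∈ p.edges, K ≤ F₁ f → K ≤ F₂ f)
    (h1 : K ≤ pathKey G h F₁ a b) : K ≤ pathKey G h F₂ a b := by
  rcases Nat.eq_zero_or_pos K with rfl | hK
  · exact Nat.zero_le _
  have hne : {m | ∃ p : G.Walk a b, 0 < p.length ∧ p.length ≤ h ∧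
      m = sInf {x | ∃ f ∈ p.edges, x = F₁ f}}.Nonempty := by
    by_contra hemp
    rw [Set.not_nonempty_iff_eq_empty] at hemp
    rw [pathKey, hemp, csSup_empty] at h1
    simp only [Nat.bot_eq_zero] at h1
    omega
  obtain ⟨p, hp0, hph, hm⟩ := Nat.sSup_mem hne (pathKey_bddAbove F₁ a b)
  rw [pathKey] at h1
  -- sSup of the set equals sInf {x | ...} via hm
  have hKm : K ≤ sInf {x | ∃ f ∈ p.edges, x = F₁ f} := hm ▸ h1
  have hedge : ∀ f ∈ p.edges, K ≤ F₂ f := by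
    intro f hf
    exact hcd p hph f hf (le_trans hKm (Nat.sInf_le ⟨f, hf, rfl⟩))
  have hne2 : {x | ∃ f ∈ p.edges, x = F₂ f}.Nonempty := by
    obtain ⟨f, hf⟩ := edges_nonempty hp0
    exact ⟨F₂ f, f, hf, rfl⟩
  obtain ⟨f₂, hf₂, hm₂⟩ := Nat.sInf_mem hne2
  calc K ≤ F₂ f₂ := hedge f₂ hf₂
    _ = sInf {x | ∃ f ∈ p.edges, x = F₂ f} := hm₂.symm
    _ ≤ pathKey G h F₂ a b := le_csSup (pathKey_bddAbove F₂ a b) ⟨p, hp0, hph, rfl⟩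

private lemma edgeKey_le (F₁ F₂ : Sym2 V → ℕ) (e : Sym2 V) (w : V)
    (hle : ∀ x ∈ e, pathKey G h F₂ x w ≤ pathKey G h F₁ x w) :
    edgeKey G h F₂ e w ≤ edgeKey G h F₁ e w := by
  have hne : {m | ∃ x ∈ e, m = pathKey G h F₁ x w}.Nonempty :=
    ⟨_, e.out.1, Sym2.out_fst_mem e, rfl⟩
  obtain ⟨x₀, hx₀, hm⟩ := Nat.sInf_mem hne
  calc edgeKey G h F₂ e w ≤ pathKey G h F₂ x₀ w := Nat.sInf_le ⟨x₀, hx₀, rfl⟩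
    _ ≤ pathKey G h F₁ x₀ w := hle x₀ hx₀
    _ = edgeKey G h F₁ e w := hm.symm

private lemma le_edgeKey (F : Sym2 V → ℕ) (e : Sym2 V) (w : V) (K : ℕ)
    (hall : ∀ x ∈ e, K ≤ pathKey G h F x w) : K ≤ edgeKey G h F e w :=
  le_csInf ⟨_, e.out.1, Sym2.out_fst_mem e, rfl⟩ (by rintro b ⟨x, hx, rfl⟩; exact hall x hx)

private lemma edgeKey_le_pathKey (F : Sym2 V → ℕ) (e : Sym2 V) (w : V) {x : V} (hx : x ∈ e) :
    edgeKey G h F e w ≤ pathKey G h F x w :=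
  Nat.sInf_le ⟨x, hx, rfl⟩

end MyAux2
/-- Redundant-computation pruning, general form: if every edge `e'` lying
on some path of length `≤ h` from an endpoint of `e` to a common `h`-neighbor of `e`
satisfies one of the three conditions (i), (ii), (iii), then `H^(n)sup(e) = H^(n-1)sup(e)`. -/
theorem HSup_pruning_general {V : Type*} [Fintype V] (G : SimpleGraph V) (h : ℕ)
    (hh : 1 ≤ h) (n : ℕ) (hn : 2 ≤ n) (e : Sym2 V) (he : e ∈ G.edgeSet)
    (hcond : ∀ e' ∈ {f : Sym2 V | ∃ x ∈ e, ∃ w ∈ commonHNbrs G h e,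
        ∃ p : G.Walk x w, p.length ≤ h ∧ f ∈ p.edges},
      (HSup G h (n - 2) e' = HSup G h (n - 1) e') ∨
      (HSup G h (n - 1) e' < HSup G h (n - 2) e' ∧
        HSup G h (n - 2) e' < HSup G h (n - 1) e) ∨
      (HSup G h (n - 1) e' < HSup G h (n - 2) e' ∧
        HSup G h (n - 1) e ≤ HSup G h (n - 1) e')) :
    HSup G h n e = HSup G h (n - 1) e := by
  classical
  obtain ⟨k, rfl⟩ : ∃ k, n = k + 2 := ⟨n - 2, by omega⟩
  simp only [show k + 2 - 2 = k from rfl, show k + 2 - 1 = k + 1 from rfl] at hcond ⊢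
  have hrel : ∀ x ∈ e, ∀ w ∈ commonHNbrs G h e, ∀ p : G.Walk x w, p.length ≤ h →
      ∀ f ∈ p.edges, HSup G h (k+1) f ≤ HSup G h k f ∧
        (HSup G h (k+1) e ≤ HSup G h k f → HSup G h (k+1) e ≤ HSup G h (k+1) f) := by
    intro x hx w hw p hp f hf
    have hmem : f ∈ {f : Sym2 V | ∃ x ∈ e, ∃ w ∈ commonHNbrs G h e,
        ∃ p : G.Walk x w, p.length ≤ h ∧ f ∈ p.edges} := ⟨x, hx, w, hw, p, hp, hf⟩
    rcases hcond f hmem with h1 | ⟨h1, h2⟩ | ⟨h1, h2⟩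
    · exact ⟨le_of_eq h1.symm, fun hK => h1 ▸ hK⟩
    · exact ⟨le_of_lt h1, fun hK => absurd h2 (by omega)⟩
    · exact ⟨le_of_lt h1, fun _ => h2⟩
  have hkey : ∀ w ∈ ((commonHNbrs G h e).toFinite.toFinset.val),
      edgeKey G h (HSup G h (k+1)) e w ≤ edgeKey G h (HSup G h k) e w ∧
      (HSup G h (k+1) e ≤ edgeKey G h (HSup G h k) e w →
        HSup G h (k+1) e ≤ edgeKey G h (HSup G h (k+1)) e w) := by
    intro w hwv
    have hw : w ∈ commonHNbrs G h e := by
      rw [← Set.Finite.mem_toFinset (commonHNbrs G h e).toFinite]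
      exact hwv
    constructor
    · exact edgeKey_le _ _ _ _ (fun x hx =>
        pathKey_le _ _ _ _ (fun p hp f hf => (hrel x hx w hw p hp f hf).1))
    · intro hK1
      refine le_edgeKey _ _ _ _ (fun x hx => ?_)
      refine le_pathKey (HSup G h k) _ _ _ _
        (fun p hp f hf => (hrel x hx w hw p hp f hf).2) ?_
      exact le_trans hK1 (edgeKey_le_pathKey _ _ _ hx)
  exact hIndex_map_eq ((commonHNbrs G h e).toFinite.toFinset.val)
    (edgeKey G h (HSup G h k) e) (edgeKey G h (HSup G h (k+1)) e) hkey
end
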